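/- arXiv:0706.1575 — 3 statements merged into one kernel-verified Lean document; each statement's English description precedes it below -/
import Mathlib

section
/- With respect to the Fischer-type inner product on F^n_d, the subspace U^n_d = {theta(xi)*xi : theta in P^n_{d-1}} and the divergence-free subspace V^n_d are orthogonal complements: F^n_d = V^n_d ⊕ U^n_d with V^n_d ⟂ U^n_d. -/
open MvPolynomial Matrix

noncomputable def Pnd (n d : ℕ) : Submodule ℝ (MvPolynomial (Fin n) ℝ) :=
  homogeneousSubmodule (Fin n) ℝ d

noncomputable def Fnd (n d : ℕ) : Submodule ℝ (Fin n → MvPolynomial (Fin n) ℝ) :=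
  Submodule.pi Set.univ fun _ => homogeneousSubmodule (Fin n) ℝ d

noncomputable def divL (n : ℕ) : (Fin n → MvPolynomial (Fin n) ℝ) →ₗ[ℝ] MvPolynomial (Fin n) ℝ :=
  ∑ i, (pderiv i).toLinearMap ∘ₗ LinearMap.proj i

noncomputable def adL {n : ℕ} (N : Matrix (Fin n) (Fin n) ℝ) :
    (Fin n → MvPolynomial (Fin n) ℝ) →ₗ[ℝ] (Fin n → MvPolynomial (Fin n) ℝ) :=
  LinearMap.pi fun i =>
    (∑ j, (LinearMap.mulLeft ℝ (∑ k, N j k • (X k : MvPolynomial (Fin n) ℝ))) ∘ₗ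
        (pderiv j).toLinearMap ∘ₗ LinearMap.proj i)
      - ∑ j, N i j • LinearMap.proj j

noncomputable def diffOp {n : ℕ} (m : Fin n →₀ ℕ) :
    Module.End ℝ (MvPolynomial (Fin n) ℝ) :=
  (List.finRange n).foldr
    (fun i f => (((pderiv i).toLinearMap : Module.End ℝ (MvPolynomial (Fin n) ℝ)) ^ (m i)) * f) 1

/-- Fischer inner product `⟨p,q⟩ = p(∂_ξ) q(ξ) |_{ξ=0}`. -/
noncomputable def fischer {n : ℕ} (p q : MvPolynomial (Fin n) ℝ) : ℝ :=
  constantCoeff ((AddMonoidAlgebra.coeff p).sum fun m c => c • (diffOp m q))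

noncomputable def fischerV {n : ℕ} (p q : Fin n → MvPolynomial (Fin n) ℝ) : ℝ :=
  ∑ i, fischer (p i) (q i)

noncomputable def radialL (n : ℕ) : MvPolynomial (Fin n) ℝ →ₗ[ℝ] (Fin n → MvPolynomial (Fin n) ℝ) :=
  LinearMap.pi fun i => LinearMap.mulLeft ℝ (X i)

noncomputable def Und (n d : ℕ) : Submodule ℝ (Fin n → MvPolynomial (Fin n) ℝ) :=
  Submodule.map (radialL n) (Pnd n (d - 1))

def N3 : Matrix (Fin 3) (Fin 3) ℝ := !![0,1,0; 0,0,1; 0,0,0]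

noncomputable def B3 : MvPolynomial (Fin 3) ℝ := 2 * X 0 * X 2 - X 1 ^ 2

/-! Multiplication by `ξᵢ` is adjoint to `∂ᵢ` for the Fischer product, so `⟨θ ξ, v⟩ = ⟨θ, div v⟩`
and `U` is orthogonal to the divergence-free fields. By Euler's identity `div (θ ξ) = (n + d - 1) θ`
for `θ` homogeneous of degree `d - 1`, so `div` is injective on `U`, and every `v ∈ F` splits as
`(v - θ ξ) + θ ξ` with `θ = div v / (n + d - 1)`. -/

theorem List.prod_map_pow_add_single {ι M : Type*} [DecidableEq ι] [Monoid M] {E : ι → M}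
    (hE : ∀ i j, Commute (E i) (E j)) (m : ι →₀ ℕ) (i : ι) (L : List ι) :
    (L.map fun j => E j ^ (m + Finsupp.single i 1 : ι →₀ ℕ) j).prod =
      (L.map fun j => E j ^ m j).prod * E i ^ L.count i := by
  induction L with
  | nil => simp
  | cons a L ih =>
    simp only [List.map_cons, List.prod_cons, List.count_cons]
    rw [ih, Finsupp.add_apply, Finsupp.single_apply]
    obtain rfl | hai := eq_or_ne a i
    · have hcomm : Commute (E a) (L.map fun j => E j ^ m j).prod :=
        Commute.list_prod_right _ _ fun x hx => by
          obtain ⟨j, -, rfl⟩ := List.mem_map.mp hx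
          exact (hE a j).pow_right _
      simp only [beq_self_eq_true, if_true]
      rw [pow_succ, pow_succ', mul_assoc, ← mul_assoc (E a), hcomm.eq, mul_assoc, mul_assoc]
    · simp [if_neg hai.symm, hai, mul_assoc]

namespace MvPolynomial

theorem pderiv_pderiv_comm {σ R : Type*} [CommRing R] (i j : σ) (p : MvPolynomial σ R) :
    pderiv i (pderiv j p) = pderiv j (pderiv i p) := by
  classical
  have hbracket : ⁅pderiv i, pderiv j⁆ = (0 : Derivation R (MvPolynomial σ R) _) :=
    derivation_ext fun k => by
      rw [Derivation.commutator_apply]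
      simp only [pderiv_X, Pi.single_apply]
      split_ifs <;> simp
  have := congrArg (· p) hbracket
  simp only [Derivation.commutator_apply] at this
  exact sub_eq_zero.mp this

end MvPolynomial

section Fischer

variable {n : ℕ}

theorem diffOp_eq_prod (m : Fin n →₀ ℕ) :
    diffOp m = ((List.finRange n).map fun i =>
      ((pderiv i).toLinearMap : Module.End ℝ (MvPolynomial (Fin n) ℝ)) ^ m i).prod := by
  rw [diffOp, List.prod_eq_foldr, List.foldr_map]

theorem diffOp_add_single (m : Fin n →₀ ℕ) (i : Fin n) :
    diffOp (m + Finsupp.single i 1) = diffOp m * (pderiv i).toLinearMap := by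
  rw [diffOp_eq_prod, diffOp_eq_prod, List.prod_map_pow_add_single, List.count_finRange, pow_one]
  exact fun i j => LinearMap.ext (pderiv_pderiv_comm i j)

theorem fischer_monomial_left (m : Fin n →₀ ℕ) (c : ℝ) (q : MvPolynomial (Fin n) ℝ) :
    fischer (monomial m c) q = c * constantCoeff (diffOp m q) := by
  rw [fischer, sum_monomial_eq (zero_smul ℝ _), smul_eq_C_mul, map_mul, constantCoeff_C]

theorem fischer_add_left (p p' q : MvPolynomial (Fin n) ℝ) :
    fischer (p + p') q = fischer p q + fischer p' q := by
  rw [fischer, fischer, fischer, ← map_add, AddMonoidAlgebra.coeff_add,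
    Finsupp.sum_add_index' (fun m => zero_smul ℝ (diffOp m q)) fun _ _ _ => add_smul _ _ _]

theorem fischer_sum_right {ι : Type*} (s : Finset ι) (p : MvPolynomial (Fin n) ℝ)
    (q : ι → MvPolynomial (Fin n) ℝ) :
    fischer p (∑ k ∈ s, q k) = ∑ k ∈ s, fischer p (q k) := by
  simp only [fischer, Finsupp.sum, map_sum, Finset.smul_sum]
  exact Finset.sum_comm

theorem fischer_zero_right (p : MvPolynomial (Fin n) ℝ) : fischer p 0 = 0 := by
  simpa using fischer_sum_right ∅ p id

theorem fischer_X_mul_left (i : Fin n) (p q : MvPolynomial (Fin n) ℝ) :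
    fischer (X i * p) q = fischer p (pderiv i q) := by
  induction p using MvPolynomial.induction_on' with
  | add p p' hp hp' => rw [mul_add, fischer_add_left, fischer_add_left, hp, hp']
  | monomial m c =>
    rw [X, monomial_mul, one_mul, add_comm, fischer_monomial_left, fischer_monomial_left,
      diffOp_add_single, Module.End.mul_apply]
    rfl

end Fischer

section VectorFields

variable {n : ℕ}

theorem divL_apply (v : Fin n → MvPolynomial (Fin n) ℝ) :
    divL n v = ∑ i, pderiv i (v i) := by
  simp [divL]

theorem radialL_apply (θ : MvPolynomial (Fin n) ℝ) (i : Fin n) :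
    radialL n θ i = X i * θ := rfl

theorem mem_Fnd_iff {d : ℕ} {v : Fin n → MvPolynomial (Fin n) ℝ} :
    v ∈ Fnd n d ↔ ∀ i, (v i).IsHomogeneous d := by
  simp [Fnd, Submodule.mem_pi, mem_homogeneousSubmodule]

theorem fischerV_radialL (θ : MvPolynomial (Fin n) ℝ) (v : Fin n → MvPolynomial (Fin n) ℝ) :
    fischerV (radialL n θ) v = fischer θ (divL n v) := by
  simp only [fischerV, radialL_apply, fischer_X_mul_left, divL_apply, fischer_sum_right]

theorem divL_radialL {k : ℕ} {θ : MvPolynomial (Fin n) ℝ} (hθ : θ.IsHomogeneous k) :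
    divL n (radialL n θ) = ((n + k : ℕ) : ℝ) • θ := by
  simp only [divL_apply, radialL_apply, pderiv_mul, pderiv_X_self, one_mul,
    Finset.sum_add_distrib, hθ.sum_X_mul_pderiv, Finset.sum_const, Finset.card_univ,
    Fintype.card_fin, Nat.cast_add, add_smul, Nat.cast_smul_eq_nsmul]

theorem divL_mem_Pnd {d : ℕ} {v : Fin n → MvPolynomial (Fin n) ℝ} (hv : v ∈ Fnd n d) :
    divL n v ∈ Pnd n (d - 1) := by
  rw [divL_apply]
  exact Submodule.sum_mem _ fun i _ => (mem_Fnd_iff.mp hv i).pderiv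

theorem Und_le_Fnd {d : ℕ} (hd : 1 ≤ d) : Und n d ≤ Fnd n d := by
  rintro _ ⟨θ, hθ, rfl⟩
  refine mem_Fnd_iff.mpr fun i => ?_
  simpa only [radialL_apply, Nat.add_sub_cancel' hd] using (isHomogeneous_X ℝ i).mul hθ

theorem radialL_eq_zero_of_divL_eq_zero {k : ℕ} {θ : MvPolynomial (Fin n) ℝ}
    (hθ : θ.IsHomogeneous k) (h : divL n (radialL n θ) = 0) : radialL n θ = 0 := by
  obtain rfl | hn := n.eq_zero_or_pos
  · exact Subsingleton.elim _ _
  rw [divL_radialL hθ, smul_eq_zero, Nat.cast_eq_zero] at h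
  rw [h.resolve_left (by omega), map_zero]

theorem mem_ker_divL_sup_Und {d : ℕ} (hd : 1 ≤ d) {v : Fin n → MvPolynomial (Fin n) ℝ}
    (hv : v ∈ Fnd n d) : v ∈ (Fnd n d ⊓ LinearMap.ker (divL n)) ⊔ Und n d := by
  obtain rfl | hn := n.eq_zero_or_pos
  · rw [Subsingleton.elim v 0]
    exact zero_mem _
  set θ := ((n + (d - 1) : ℕ) : ℝ)⁻¹ • divL n v
  have hθ : θ ∈ Pnd n (d - 1) := Submodule.smul_mem _ _ (divL_mem_Pnd hv)
  have hrU : radialL n θ ∈ Und n d := ⟨θ, hθ, rfl⟩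
  have hdiv : divL n (radialL n θ) = divL n v := by
    rw [divL_radialL hθ, smul_inv_smul₀ (Nat.cast_ne_zero.mpr (by omega))]
  have hker : v - radialL n θ ∈ Fnd n d ⊓ LinearMap.ker (divL n) :=
    ⟨sub_mem hv (Und_le_Fnd hd hrU), LinearMap.mem_ker.mpr (by rw [map_sub, hdiv, sub_self])⟩
  simpa only [sub_add_cancel] using Submodule.add_mem_sup hker hrU

end VectorFields

theorem Vnd_Und_orthogonal_complements (n d : ℕ) (hd : 1 ≤ d) :
    (∀ u ∈ Und n d, ∀ v ∈ Fnd n d ⊓ LinearMap.ker (divL n), fischerV u v = 0) ∧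
    (Fnd n d ⊓ LinearMap.ker (divL n)) ⊔ Und n d = Fnd n d ∧
    (Fnd n d ⊓ LinearMap.ker (divL n)) ⊓ Und n d = ⊥ := by
  refine ⟨?_, le_antisymm (sup_le inf_le_left (Und_le_Fnd hd)) fun v hv =>
    mem_ker_divL_sup_Und hd hv, ?_⟩
  · rintro _ ⟨θ, -, rfl⟩ v ⟨-, hv⟩
    rw [fischerV_radialL, LinearMap.mem_ker.mp hv, fischer_zero_right]
  · rw [eq_bot_iff]
    rintro _ ⟨⟨-, hker⟩, θ, hθ, rfl⟩
    exact (Submodule.mem_bot ℝ).mpr (radialL_eq_zero_of_divL_eq_zero hθ hker)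
end

section
/- Let N be the 2×2 nilpotent Jordan block (N e_1 = 0, N e_2 = e_1). The kernel of ad_{N^*} on F^2_d is exactly the set of vector fields of the form (x φ1(x), y φ1(x) + φ2(x)) with φ1, φ2 polynomials in x alone (of degrees d-1 and d), and this kernel has dimension 2 for every d >= 1. -/
open MvPolynomial Matrix

def N2 : Matrix (Fin 2) (Fin 2) ℝ := !![0,1; 0,0]

/-!
Componentwise, `ad_{N^*} h = (x ∂_y h₀, x ∂_y h₁ - h₀)`, so `h` lies in the kernel exactly when
`∂_y h₀ = 0` and `x ∂_y h₁ = h₀`. In characteristic zero a form of degree `d` killed by `∂_y`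
is `c x^d`; hence `h₀ = a x^d`, then `∂_y (h₁ - a x^{d-1} y) = 0` gives `h₁ = a x^{d-1} y + b x^d`.
The kernel is thus spanned by the independent fields `(x^d, x^{d-1} y)` and `(0, x^d)`.
-/

section PDeriv

variable {σ R : Type*} [CommRing R] [NoZeroDivisors R] [CharZero R]

theorem coeff_eq_zero_of_pderiv_eq_zero {i : σ} {p : MvPolynomial σ R} (hp : pderiv i p = 0)
    {m : σ →₀ ℕ} (hm : m i ≠ 0) : coeff m p = 0 := by
  obtain ⟨k, rfl⟩ : ∃ k, m = k + Finsupp.single i 1 :=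
    ⟨m - Finsupp.single i 1,
      (tsub_add_cancel_of_le (Finsupp.single_le_iff.2 (Nat.one_le_iff_ne_zero.2 hm))).symm⟩
  have hcoeff := coeff_pderiv (i := i) p k
  rw [hp, coeff_zero, eq_comm, mul_eq_zero] at hcoeff
  exact hcoeff.resolve_right (by exact_mod_cast Nat.succ_ne_zero (k i))

theorem eq_C_mul_X_zero_pow_of_pderiv_one_eq_zero {p : MvPolynomial (Fin 2) R} {d : ℕ}
    (hp : p.IsHomogeneous d) (h1 : pderiv 1 p = 0) :
    p = C (coeff (Finsupp.single 0 d) p) * X 0 ^ d := by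
  ext m
  rw [C_mul_X_pow_eq_monomial, coeff_monomial]
  split_ifs with hm
  · rw [hm]
  by_cases hm1 : m 1 = 0
  · refine hp.coeff_eq_zero fun hdeg => hm ?_
    rw [Finsupp.degree_eq_sum, Fin.sum_univ_two, hm1, add_zero] at hdeg
    ext j
    fin_cases j <;> simp [hdeg, hm1]
  · exact coeff_eq_zero_of_pderiv_eq_zero h1 hm1

end PDeriv

theorem isHomogeneous_X_zero_pow_pred_mul_X_one {R : Type*} [CommSemiring R] {d : ℕ}
    (hd : 1 ≤ d) : (X 0 ^ (d - 1) * X 1 : MvPolynomial (Fin 2) R).IsHomogeneous d := by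
  simpa [Nat.sub_add_cancel hd] using
    (isHomogeneous_X_pow (0 : Fin 2) (d - 1)).mul (isHomogeneous_X R 1)

theorem adL_N2_transpose_eq_zero_iff (h : Fin 2 → MvPolynomial (Fin 2) ℝ) :
    adL N2ᵀ h = 0 ↔ pderiv 1 (h 0) = 0 ∧ X 0 * pderiv 1 (h 1) = h 0 := by
  rw [funext_iff, Fin.forall_fin_two]
  simp [adL, N2, Fin.sum_univ_two, sub_eq_zero]

noncomputable def kerVec₁ (d : ℕ) : Fin 2 → MvPolynomial (Fin 2) ℝ := ![X 0 ^ d, X 0 ^ (d - 1) * X 1]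

noncomputable def kerVec₂ (d : ℕ) : Fin 2 → MvPolynomial (Fin 2) ℝ := ![0, X 0 ^ d]

theorem mem_span_kerVec_of_adL_eq_zero {d : ℕ} (hd : 1 ≤ d) {h : Fin 2 → MvPolynomial (Fin 2) ℝ}
    (hF : h ∈ Fnd 2 d) (hK : adL N2ᵀ h = 0) : h ∈ Submodule.span ℝ {kerVec₁ d, kerVec₂ d} := by
  have hhom : ∀ i, (h i).IsHomogeneous d := fun i => Submodule.mem_pi.1 hF i (Set.mem_univ i)
  obtain ⟨h0, h1⟩ := (adL_N2_transpose_eq_zero_iff h).1 hK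
  set a := coeff (Finsupp.single 0 d) (h 0)
  have H0 : h 0 = C a * X 0 ^ d := eq_C_mul_X_zero_pow_of_pderiv_one_eq_zero (hhom 0) h0
  have hderiv : pderiv 1 (h 1) = C a * X 0 ^ (d - 1) := by
    refine mul_left_cancel₀ (X_ne_zero 0) ?_
    rw [h1, H0, mul_left_comm, mul_pow_sub_one (by omega)]
  set q := h 1 - C a * (X 0 ^ (d - 1) * X 1)
  have hq : q.IsHomogeneous d := (hhom 1).sub ((isHomogeneous_X_zero_pow_pred_mul_X_one hd).C_mul a)
  have hq1 : pderiv 1 q = 0 := by simp [q, hderiv]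
  have H1 := eq_C_mul_X_zero_pow_of_pderiv_one_eq_zero hq hq1
  rw [sub_eq_iff_eq_add'] at H1
  rw [Submodule.mem_span_pair]
  refine ⟨a, coeff (Finsupp.single 0 d) q, funext (Fin.forall_fin_two.2 ⟨?_, ?_⟩)⟩
  · simp [kerVec₁, kerVec₂, H0, smul_eq_C_mul]
  · simp [kerVec₁, kerVec₂, H1, smul_eq_C_mul]

theorem Fnd_inf_ker_adL_N2_transpose_eq_span {d : ℕ} (hd : 1 ≤ d) :
    Fnd 2 d ⊓ LinearMap.ker (adL N2ᵀ) = Submodule.span ℝ {kerVec₁ d, kerVec₂ d} := by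
  refine le_antisymm (fun h ⟨hF, hK⟩ => mem_span_kerVec_of_adL_eq_zero hd hF hK) ?_
  rw [Submodule.span_le, Set.insert_subset_iff, Set.singleton_subset_iff]
  refine ⟨⟨?_, ?_⟩, ⟨?_, ?_⟩⟩
  · refine Submodule.mem_pi.2 fun i _ => ?_
    fin_cases i
    exacts [isHomogeneous_X_pow _ _, isHomogeneous_X_zero_pow_pred_mul_X_one hd]
  · refine (adL_N2_transpose_eq_zero_iff _).2 ⟨?_, ?_⟩ <;>
      simp [kerVec₁, mul_pow_sub_one (show d ≠ 0 by omega)]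
  · refine Submodule.mem_pi.2 fun i _ => ?_
    fin_cases i
    exacts [isHomogeneous_zero _ _ _, isHomogeneous_X_pow _ _]
  · exact (adL_N2_transpose_eq_zero_iff _).2 (by simp [kerVec₂])

theorem linearIndependent_kerVec (d : ℕ) : LinearIndependent ℝ ![kerVec₁ d, kerVec₂ d] := by
  rw [LinearIndependent.pair_iff]
  intro a b hab
  have ha : a = 0 := by simpa [kerVec₁, kerVec₂] using congrFun hab 0
  exact ⟨ha, by simpa [kerVec₁, kerVec₂, ha] using congrFun hab 1⟩

theorem kernel_adNstar_dim2 (d : ℕ) (hd : 1 ≤ d) :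
    (∀ h ∈ Fnd 2 d, (adL N2ᵀ h = 0 ↔
      ∃ φ1 φ2 : Polynomial ℝ, φ1.natDegree ≤ d - 1 ∧ φ2.natDegree ≤ d ∧
        h 0 = X 0 * Polynomial.aeval (X 0 : MvPolynomial (Fin 2) ℝ) φ1 ∧
        h 1 = X 1 * Polynomial.aeval (X 0 : MvPolynomial (Fin 2) ℝ) φ1 +
          Polynomial.aeval (X 0 : MvPolynomial (Fin 2) ℝ) φ2)) ∧
    Module.finrank ℝ ↥(Fnd 2 d ⊓ LinearMap.ker (adL N2ᵀ)) = 2 := by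
  refine ⟨fun h hF => ⟨fun hK => ?_, ?_⟩, ?_⟩
  · obtain ⟨a, b, rfl⟩ := Submodule.mem_span_pair.1 (mem_span_kerVec_of_adL_eq_zero hd hF hK)
    refine ⟨Polynomial.C a * Polynomial.X ^ (d - 1), Polynomial.C b * Polynomial.X ^ d,
      Polynomial.natDegree_C_mul_X_pow_le _ _, Polynomial.natDegree_C_mul_X_pow_le _ _, ?_, ?_⟩
    · simp only [Pi.add_apply, Pi.smul_apply, kerVec₁, kerVec₂, Matrix.cons_val_zero, smul_zero,
        add_zero, map_mul, map_pow, Polynomial.aeval_C, Polynomial.aeval_X, algebraMap_eq,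
        smul_eq_C_mul]
      rw [mul_left_comm, mul_pow_sub_one (by omega)]
    · simp only [Pi.add_apply, Pi.smul_apply, kerVec₁, kerVec₂, Matrix.cons_val_one,
        Matrix.cons_val_zero, map_mul, map_pow, Polynomial.aeval_C, Polynomial.aeval_X,
        algebraMap_eq, smul_eq_C_mul]
      ring
  · rintro ⟨φ1, φ2, -, -, H0, H1⟩
    refine (adL_N2_transpose_eq_zero_iff h).2 ⟨?_, ?_⟩
    · simp [H0]
    · simp [H0, H1]
  · rw [Fnd_inf_ker_adL_N2_transpose_eq_span hd, ← Matrix.range_cons_cons_empty _ _ ![],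
      finrank_span_eq_card (linearIndependent_kerVec d), Fintype.card_fin]
end

section
/- For the 3×3 nilpotent Jordan block N, the intersection of ker(ad_{N^*}) with U^3_d = {theta·xi : theta in P^3_{d-1}} equals {theta(x, 2xz - y^2)·xi : theta polynomial}, and its dimension is ceil(d/2). -/
open MvPolynomial Matrix

/-!
Since `ad_{N^*}(θ ξ) = ((N^* ξ)·∇θ) ξ`, the kernel consists of the `θ ξ` with `θ` homogeneous of
degree `d - 1` and killed by `D = x ∂_y + y ∂_z`. Comparing coefficients of `x^a y^b z^c` in
`D θ = 0` shows that such a `θ` is determined by its `y`-free coefficients, and that the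
coefficient of `x^a z^c` vanishes for `a < c`. So the invariants of degree `n` embed into
`ℝ^(⌊n/2⌋+1)`, while the `⌊n/2⌋ + 1` invariants `x^(n-2k) β^k` are independent (the `y`-free part
of `β^k` is `(2xz)^k`); hence they form a basis.
-/

theorem Derivation.map_aeval_eq_zero {R A M σ : Type*} [CommSemiring R] [CommSemiring A]
    [Algebra R A] [AddCommMonoid M] [Module A M] [Module R M] [IsScalarTower R A M]
    (D : Derivation R A M) {f : σ → A} (hf : ∀ i, D (f i) = 0) (p : MvPolynomial σ R) :
    D (aeval f p) = 0 := by
  induction p using MvPolynomial.induction_on with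
  | C a => rw [aeval_C, D.map_algebraMap]
  | add p q hp hq => rw [map_add, map_add, hp, hq, add_zero]
  | mul_X p i hp => rw [map_mul, D.leibniz, hp, aeval_X, hf, smul_zero, smul_zero, add_zero]

section LinearVectorField

variable {n : ℕ}

noncomputable def linearVectorField (N : Matrix (Fin n) (Fin n) ℝ) :
    Derivation ℝ (MvPolynomial (Fin n) ℝ) (MvPolynomial (Fin n) ℝ) :=
  ∑ j, (∑ k, N j k • (X k : MvPolynomial (Fin n) ℝ)) • pderiv j

theorem linearVectorField_apply (N : Matrix (Fin n) (Fin n) ℝ) (f : MvPolynomial (Fin n) ℝ) :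
    linearVectorField N f = ∑ j, (∑ k, N j k • X k) * pderiv j f := by
  simp only [linearVectorField, ← Derivation.coeFnAddMonoidHom_apply, map_sum, Finset.sum_apply]
  rfl

theorem linearVectorField_X (N : Matrix (Fin n) (Fin n) ℝ) (i : Fin n) :
    linearVectorField N (X i) = ∑ k, N i k • X k := by
  simp [linearVectorField_apply, pderiv_X, Pi.single_apply]

theorem adL_apply (N : Matrix (Fin n) (Fin n) ℝ) (u : Fin n → MvPolynomial (Fin n) ℝ)
    (i : Fin n) :
    adL N u i = linearVectorField N (u i) - ∑ j, N i j • u j := by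
  simp [adL, linearVectorField_apply]

theorem adL_radialL (N : Matrix (Fin n) (Fin n) ℝ) (θ : MvPolynomial (Fin n) ℝ) :
    adL N (radialL n θ) = radialL n (linearVectorField N θ) := by
  funext i
  rw [adL_apply, radialL_apply, Derivation.leibniz, linearVectorField_X, smul_eq_mul, smul_eq_mul,
    Finset.mul_sum]
  simp only [radialL_apply, mul_comm θ, smul_mul_assoc, add_sub_cancel_right]

theorem radialL_injective [NeZero n] : Function.Injective (radialL n) := fun _ _ h =>
  mul_left_cancel₀ (X_ne_zero (0 : Fin n)) (congrFun h 0)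

theorem adL_radialL_eq_zero_iff [NeZero n] (N : Matrix (Fin n) (Fin n) ℝ)
    (θ : MvPolynomial (Fin n) ℝ) :
    adL N (radialL n θ) = 0 ↔ linearVectorField N θ = 0 := by
  rw [adL_radialL, ← map_zero (radialL n), radialL_injective.eq_iff]

end LinearVectorField

section JordanField

local notation "R3" => MvPolynomial (Fin 3) ℝ

noncomputable def jordanField : Derivation ℝ R3 R3 :=
  (X 0 : R3) • pderiv 1 + (X 1 : R3) • pderiv 2

theorem jordanField_apply (f : R3) : jordanField f = X 0 * pderiv 1 f + X 1 * pderiv 2 f := rfl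

theorem linearVectorField_N3_transpose : linearVectorField N3ᵀ = jordanField := by
  ext f
  simp [linearVectorField_apply, jordanField_apply, Fin.sum_univ_three, N3]

theorem adL_N3_transpose_radialL_eq_zero_iff (θ : R3) :
    adL N3ᵀ (radialL 3 θ) = 0 ↔ jordanField θ = 0 := by
  rw [adL_radialL_eq_zero_iff, linearVectorField_N3_transpose]

noncomputable def exps (a b c : ℕ) : Fin 3 →₀ ℕ :=
  Finsupp.single 0 a + Finsupp.single 1 b + Finsupp.single 2 c

@[simp] theorem exps_apply_zero (a b c : ℕ) : exps a b c 0 = a := by simp [exps]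
@[simp] theorem exps_apply_one (a b c : ℕ) : exps a b c 1 = b := by simp [exps]
@[simp] theorem exps_apply_two (a b c : ℕ) : exps a b c 2 = c := by simp [exps]

theorem eq_exps (m : Fin 3 →₀ ℕ) : m = exps (m 0) (m 1) (m 2) := by
  ext i; fin_cases i <;> simp

theorem exps_inj {a b c a' b' c' : ℕ} :
    exps a b c = exps a' b' c' ↔ a = a' ∧ b = b' ∧ c = c' := by
  refine ⟨fun h => ⟨?_, ?_, ?_⟩, by rintro ⟨rfl, rfl, rfl⟩; rfl⟩ <;>
  [simpa using DFunLike.congr_fun h 0; simpa using DFunLike.congr_fun h 1;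
    simpa using DFunLike.congr_fun h 2]

@[simp] theorem exps_add_exps (a b c a' b' c' : ℕ) :
    exps a b c + exps a' b' c' = exps (a + a') (b + b') (c + c') := by
  ext i; fin_cases i <;> simp

@[simp] theorem exps_sub_exps (a b c a' b' c' : ℕ) :
    exps a b c - exps a' b' c' = exps (a - a') (b - b') (c - c') := by
  ext i; fin_cases i <;> simp

@[simp] theorem single_zero_eq_exps (n : ℕ) : Finsupp.single 0 n = exps n 0 0 := by
  ext i; fin_cases i <;> simp
@[simp] theorem single_one_eq_exps (n : ℕ) : Finsupp.single 1 n = exps 0 n 0 := by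
  ext i; fin_cases i <;> simp
@[simp] theorem single_two_eq_exps (n : ℕ) : Finsupp.single 2 n = exps 0 0 n := by
  ext i; fin_cases i <;> simp

@[simp] theorem degree_exps (a b c : ℕ) : (exps a b c).degree = a + b + c := by
  simp only [exps, map_add, Finsupp.degree_single]

theorem coeff_jordanField_succ_succ (a b c : ℕ) (f : R3) :
    coeff (exps (a + 1) (b + 1) c) (jordanField f) =
      (b + 2) * coeff (exps a (b + 2) c) f + (c + 1) * coeff (exps (a + 1) b (c + 1)) f := by
  simp [jordanField_apply, coeff_X_mul', coeff_pderiv]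
  ring_nf

theorem coeff_jordanField_zero_succ (b c : ℕ) (f : R3) :
    coeff (exps 0 (b + 1) c) (jordanField f) = (c + 1) * coeff (exps 0 b (c + 1)) f := by
  simp [jordanField_apply, coeff_X_mul', coeff_pderiv, mul_comm]

theorem coeff_jordanField_succ_zero (a c : ℕ) (f : R3) :
    coeff (exps (a + 1) 0 c) (jordanField f) = coeff (exps a 1 c) f := by
  simp [jordanField_apply, coeff_X_mul', coeff_pderiv]

theorem jordanField_X_zero : jordanField (X 0) = 0 := by
  simp [jordanField_apply, pderiv_X]

theorem jordanField_B3 : jordanField B3 = 0 := by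
  rw [B3, ← map_ofNat C 2]
  simp [jordanField_apply, pderiv_X]
  rw [map_ofNat]
  ring

theorem isHomogeneous_B3 : B3.IsHomogeneous 2 := by
  rw [B3, ← map_ofNat C 2]
  exact ((isHomogeneous_C_mul_X _ 0).mul (isHomogeneous_X ℝ 2)).sub (isHomogeneous_X_pow 1 2)

theorem jordanField_aeval (Θ : MvPolynomial (Fin 2) ℝ) :
    jordanField (aeval (![X 0, B3] : Fin 2 → R3) Θ) = 0 := by
  refine jordanField.map_aeval_eq_zero (fun i => ?_) Θ
  fin_cases i
  exacts [jordanField_X_zero, jordanField_B3]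

theorem coeff_X_zero_pow_mul_B3_pow (p q a c : ℕ) :
    coeff (exps a 0 c) (X 0 ^ p * B3 ^ q) = if a = p + q ∧ c = q then 2 ^ q else 0 := by
  induction q generalizing p a c with
  | zero =>
    simp [X_pow_eq_monomial, coeff_monomial, exps_inj, eq_comm]
  | succ q ih =>
    have hB : (X 0 ^ p * B3 ^ (q + 1) : R3) =
        C 2 * (X 0 ^ (p + 1) * B3 ^ q * X 2) - X 0 ^ p * B3 ^ q * X 1 * X 1 := by
      rw [B3, ← map_ofNat C 2]; ring
    rw [hB, coeff_sub, coeff_C_mul, coeff_mul_X' _ 1, if_neg (by simp), sub_zero, coeff_mul_X']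
    rcases c with _ | c
    · simp
    · rw [if_pos (by simp), show exps a 0 (c + 1) - Finsupp.single 2 1 = exps a 0 c by simp, ih]
      split_ifs <;> first | (exfalso; omega) | ring

theorem coeff_eq_zero_of_jordanField_eq_zero_of_lt {θ : R3} (h : jordanField θ = 0) {a c : ℕ}
    (b : ℕ) (hac : a < c) : coeff (exps a b c) θ = 0 := by
  induction a generalizing b c with
  | zero =>
    obtain ⟨c, rfl⟩ : ∃ c', c = c' + 1 := ⟨c - 1, by omega⟩
    have hrel := coeff_jordanField_zero_succ b c θ
    rw [h, coeff_zero, eq_comm, mul_eq_zero] at hrel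
    exact hrel.resolve_left (by positivity)
  | succ a ih =>
    obtain ⟨c, rfl⟩ : ∃ c', c = c' + 1 := ⟨c - 1, by omega⟩
    have hrel := coeff_jordanField_succ_succ a b c θ
    rw [h, coeff_zero, ih (b + 2) (by omega), mul_zero, zero_add, eq_comm, mul_eq_zero] at hrel
    exact hrel.resolve_left (by positivity)

theorem eq_zero_of_jordanField_eq_zero {θ : R3} (h : jordanField θ = 0)
    (h₀ : ∀ a c, coeff (exps a 0 c) θ = 0) : θ = 0 := by
  have key : ∀ b a c, coeff (exps a b c) θ = 0 := by
    intro b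
    induction b using Nat.twoStepInduction with
    | zero => exact h₀
    | one => intro a c; rw [← coeff_jordanField_succ_zero, h, coeff_zero]
    | more b ih _ =>
      intro a c
      have hrel := coeff_jordanField_succ_succ a b c θ
      rw [h, coeff_zero, ih, mul_zero, add_zero, eq_comm, mul_eq_zero] at hrel
      exact hrel.resolve_left (by positivity)
  ext m
  rw [eq_exps m, key, coeff_zero]

noncomputable def invariantBasis (n : ℕ) (k : Fin (n / 2 + 1)) : R3 :=
  X 0 ^ (n - 2 * k) * B3 ^ (k : ℕ)

theorem invariantBasis_eq_aeval {n : ℕ} (k : Fin (n / 2 + 1)) :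
    invariantBasis n k =
      aeval ![X 0, B3] (X 0 ^ (n - 2 * k) * X 1 ^ (k : ℕ) : MvPolynomial (Fin 2) ℝ) := by
  simp [invariantBasis]

theorem isHomogeneous_invariantBasis {n : ℕ} (k : Fin (n / 2 + 1)) :
    (invariantBasis n k).IsHomogeneous n := by
  have hk := k.isLt
  have h := (isHomogeneous_X_pow (0 : Fin 3) (n - 2 * k)).mul (isHomogeneous_B3.pow k)
  rwa [show n - 2 * k + 2 * k = n by omega] at h

theorem coeff_invariantBasis {n : ℕ} (j k : Fin (n / 2 + 1)) :
    coeff (exps (n - j) 0 j) (invariantBasis n k) = if j = k then 2 ^ (k : ℕ) else 0 := by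
  have := k.isLt
  rw [invariantBasis, coeff_X_zero_pow_mul_B3_pow]
  by_cases hjk : j = k
  · subst hjk
    rw [if_pos ⟨by omega, rfl⟩, if_pos rfl]
  · rw [if_neg (fun h => hjk (Fin.ext h.2)), if_neg hjk]

theorem linearIndependent_invariantBasis (n : ℕ) : LinearIndependent ℝ (invariantBasis n) := by
  refine Fintype.linearIndependent_iff.2 fun g hg j => ?_
  have hj := congrArg (coeff (exps (n - j) 0 j)) hg
  simpa [coeff_sum, coeff_invariantBasis] using hj

noncomputable def homogeneousInvariants (n : ℕ) : Submodule ℝ R3 :=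
  Pnd 3 n ⊓ LinearMap.ker (jordanField : R3 →ₗ[ℝ] R3)

theorem invariantBasis_mem_homogeneousInvariants {n : ℕ} (k : Fin (n / 2 + 1)) :
    invariantBasis n k ∈ homogeneousInvariants n :=
  ⟨isHomogeneous_invariantBasis k, by
    rw [SetLike.mem_coe, LinearMap.mem_ker, Derivation.coeFn_coe, invariantBasis_eq_aeval]
    exact jordanField_aeval _⟩

theorem eq_zero_of_mem_homogeneousInvariants {n : ℕ} {θ : R3} (hθ : θ ∈ homogeneousInvariants n)
    (h₀ : ∀ k : Fin (n / 2 + 1), coeff (exps (n - k) 0 k) θ = 0) : θ = 0 := by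
  obtain ⟨hhom, hker : jordanField θ = 0⟩ := hθ
  refine eq_zero_of_jordanField_eq_zero hker fun a c => ?_
  by_cases hdeg : a + c = n
  · rcases lt_or_ge a c with hac | hca
    · exact coeff_eq_zero_of_jordanField_eq_zero_of_lt hker 0 hac
    · obtain rfl : a = n - c := by omega
      exact h₀ ⟨c, by omega⟩
  · exact hhom.coeff_eq_zero (by simpa using hdeg)

theorem homogeneousInvariants_eq_span (n : ℕ) :
    homogeneousInvariants n = Submodule.span ℝ (Set.range (invariantBasis n)) := by
  let φ : homogeneousInvariants n →ₗ[ℝ] Fin (n / 2 + 1) → ℝ :=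
    (LinearMap.pi fun k => lcoeff ℝ (exps (n - k) 0 k)) ∘ₗ (homogeneousInvariants n).subtype
  have hφ : Function.Injective φ := by
    refine (injective_iff_map_eq_zero φ).2 fun θ h => Subtype.ext ?_
    exact eq_zero_of_mem_homogeneousInvariants θ.2 fun k => congrFun h k
  have := FiniteDimensional.of_injective φ hφ
  refine (Submodule.eq_of_le_of_finrank_le ?_ ?_).symm
  · exact Submodule.span_le.2 (Set.range_subset_iff.2 invariantBasis_mem_homogeneousInvariants)
  · rw [finrank_span_eq_card (linearIndependent_invariantBasis n)]
    simpa using LinearMap.finrank_le_finrank_of_injective hφ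

theorem finrank_homogeneousInvariants (n : ℕ) :
    Module.finrank ℝ (homogeneousInvariants n) = n / 2 + 1 := by
  rw [homogeneousInvariants_eq_span, finrank_span_eq_card (linearIndependent_invariantBasis n),
    Fintype.card_fin]

theorem homogeneousInvariants_le_range_aeval (n : ℕ) :
    homogeneousInvariants n ≤ Subalgebra.toSubmodule (aeval ![X 0, B3]).range := by
  rw [homogeneousInvariants_eq_span, Submodule.span_le]
  rintro _ ⟨k, rfl⟩
  exact ⟨_, (invariantBasis_eq_aeval k).symm⟩

theorem Und_inf_ker_adL_N3_transpose (d : ℕ) :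
    Und 3 d ⊓ LinearMap.ker (adL N3ᵀ) = (homogeneousInvariants (d - 1)).map (radialL 3) := by
  ext u
  constructor
  · rintro ⟨⟨θ, hθ, rfl⟩, h⟩
    exact ⟨θ, ⟨hθ, (adL_N3_transpose_radialL_eq_zero_iff θ).1 h⟩, rfl⟩
  · rintro ⟨θ, ⟨hθ, h⟩, rfl⟩
    exact ⟨⟨θ, hθ, rfl⟩, (adL_N3_transpose_radialL_eq_zero_iff θ).2 h⟩

end JordanField

theorem kernel_adNstar_Und_dim3 (d : ℕ) (hd : 1 ≤ d) :
    (∀ u ∈ Und 3 d, (adL N3ᵀ u = 0 ↔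
      ∃ θ : MvPolynomial (Fin 2) ℝ, u = radialL 3 (aeval ![X 0, B3] θ))) ∧
    Module.finrank ℝ ↥(Und 3 d ⊓ LinearMap.ker (adL N3ᵀ)) = (d + 1) / 2 := by
  refine ⟨?_, ?_⟩
  · rintro _ ⟨θ, hθ, rfl⟩
    rw [adL_N3_transpose_radialL_eq_zero_iff]
    refine ⟨fun h => ?_, fun ⟨Θ, hΘ⟩ => ?_⟩
    · obtain ⟨Θ, hΘ⟩ := homogeneousInvariants_le_range_aeval (d - 1) ⟨hθ, h⟩
      exact ⟨Θ, congrArg (radialL 3) hΘ.symm⟩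
    · rw [radialL_injective hΘ]
      exact jordanField_aeval Θ
  · rw [Und_inf_ker_adL_N3_transpose,
      ← (Submodule.equivMapOfInjective _ radialL_injective _).finrank_eq,
      finrank_homogeneousInvariants]
    omega
end
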